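/- arXiv:2503.23675 — 3 statements merged into one kernel-verified Lean document; each statement's English description precedes it below -/
import Mathlib

section
/- Let x_0, ..., x_k ∈ B_r(x_0) ⊂ ℝ^m be α-linearly independent at scale r, i.e., x_{i+1} ∉ B_{αr}(x_0 + span{x_1-x_0, ..., x_i-x_0}) for each i. Then for every q in the affine subspace x_0 + span{x_1-x_0, ..., x_k-x_0}, there exist unique real numbers q_1, ..., q_k with q = x_0 + Σ_i q_i(x_i - x_0) and |q_i| ≤ C(m,α)·|q - x_0|/r for all i. -/
/-!
Write `v i = x (i+1) - x 0`, so `‖v i‖ ≤ r` and `v i` is at distance at least `α r` from the span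
of the earlier `v j`. In `u = ∑ a i • v i` the last term is `a_last • v_last` plus a vector of that
span, so `|a_last| α r ≤ ‖u‖`; removing the last term costs at most `|a_last| r ≤ ‖u‖ / α`, and
induction on `k` gives `|a i| ≤ (1 + α⁻¹)^k / α · ‖u‖ / r`. The constant is dimension-free, and
the bound also shows that the `v i` are linearly independent, whence uniqueness.
-/

open Set Metric Submodule

variable {E : Type*} [NormedAddCommGroup E] [NormedSpace ℝ E]

theorem abs_mul_le_norm_smul_add {S : Submodule ℝ E} {v s : E} {δ : ℝ}
    (hv : ∀ p ∈ S, δ ≤ ‖v - p‖) (hs : s ∈ S) (c : ℝ) : |c| * δ ≤ ‖c • v + s‖ := by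
  rcases eq_or_ne c 0 with rfl | hc
  · simp
  · calc |c| * δ ≤ |c| * ‖v - (-c⁻¹) • s‖ :=
          mul_le_mul_of_nonneg_left (hv _ (S.smul_mem _ hs)) (abs_nonneg c)
      _ = ‖c • v + s‖ := by
          rw [← Real.norm_eq_abs, ← norm_smul, smul_sub, smul_smul, mul_neg, mul_inv_cancel₀ hc,
            neg_smul, one_smul, sub_neg_eq_add]

theorem abs_le_norm_sum_smul_of_le_norm_sub_span {k : ℕ} {v : Fin k → E} {R δ : ℝ} (hδ : 0 < δ)
    (hR : ∀ i, ‖v i‖ ≤ R) (hsep : ∀ i, ∀ p ∈ span ℝ (v '' Iio i), δ ≤ ‖v i - p‖)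
    (a : Fin k → ℝ) (j : Fin k) : |a j| ≤ (1 + R / δ) ^ k / δ * ‖∑ i, a i • v i‖ := by
  induction k with
  | zero => exact j.elim0
  | succ k ih =>
    set u := ∑ i, a i • v i
    set s := ∑ i : Fin k, a i.castSucc • v i.castSucc
    have hu : u = a (Fin.last k) • v (Fin.last k) + s :=
      (Fin.sum_univ_castSucc _).trans (add_comm _ _)
    have hs : s ∈ span ℝ (v '' Iio (Fin.last k)) :=
      sum_mem fun i _ => smul_mem _ _ (subset_span ⟨_, Fin.castSucc_lt_last i, rfl⟩)
    have hlast : |a (Fin.last k)| * δ ≤ ‖u‖ := hu ▸ abs_mul_le_norm_smul_add (hsep _) hs _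
    have hR0 : 0 ≤ R := (norm_nonneg _).trans (hR (Fin.last k))
    have hρ : 1 ≤ 1 + R / δ := le_add_of_nonneg_right (div_nonneg hR0 hδ.le)
    cases j using Fin.lastCases with
    | last =>
      calc |a (Fin.last k)| ≤ 1 / δ * ‖u‖ := by rw [one_div_mul_eq_div, le_div_iff₀ hδ]; exact hlast
        _ ≤ (1 + R / δ) ^ (k + 1) / δ * ‖u‖ := by gcongr; exact one_le_pow₀ hρ
    | cast j =>
      have hs_le : ‖s‖ ≤ (1 + R / δ) * ‖u‖ :=
        calc ‖s‖ = ‖u - a (Fin.last k) • v (Fin.last k)‖ := by rw [hu, add_sub_cancel_left]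
          _ ≤ ‖u‖ + |a (Fin.last k)| * R := by
              grw [norm_sub_le, norm_smul, Real.norm_eq_abs, hR]
          _ ≤ ‖u‖ + ‖u‖ / δ * R := by gcongr; rwa [le_div_iff₀ hδ]
          _ = (1 + R / δ) * ‖u‖ := by ring
      have hsep' : ∀ i, ∀ p ∈ span ℝ ((fun i : Fin k => v i.castSucc) '' Iio i),
          δ ≤ ‖v i.castSucc - p‖ := by
        refine fun i p hp => hsep _ p (span_mono ?_ hp)
        rintro _ ⟨j, hj, rfl⟩
        exact ⟨_, Fin.castSucc_lt_castSucc_iff.2 hj, rfl⟩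
      calc |a j.castSucc| ≤ (1 + R / δ) ^ k / δ * ‖s‖ :=
            ih (fun i => hR _) hsep' (fun i => a i.castSucc) j
        _ ≤ (1 + R / δ) ^ k / δ * ((1 + R / δ) * ‖u‖) := by gcongr
        _ = (1 + R / δ) ^ (k + 1) / δ * ‖u‖ := by ring

theorem linearIndependent_of_le_norm_sub_span {k : ℕ} {v : Fin k → E} {R δ : ℝ} (hδ : 0 < δ)
    (hR : ∀ i, ‖v i‖ ≤ R) (hsep : ∀ i, ∀ p ∈ span ℝ (v '' Iio i), δ ≤ ‖v i - p‖) :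
    LinearIndependent ℝ v :=
  Fintype.linearIndependent_iff.2 fun a ha j =>
    abs_nonpos_iff.1 <| by simpa [ha] using abs_le_norm_sum_smul_of_le_norm_sub_span hδ hR hsep a j

/-- Effective coordinates with respect to α-linearly independent points:
every point of the spanned affine subspace has unique coefficients bounded by `C(m,α)|q-x₀|/r`. -/
theorem stmt_2 (m k : ℕ) (α : ℝ) (hα : 0 < α) :
    ∃ C : ℝ, 0 < C ∧
      ∀ (r : ℝ) (x : Fin (k + 1) → EuclideanSpace ℝ (Fin m)), 0 < r →
        (∀ i, x i ∈ ball (x 0) r) →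
        (∀ i : Fin k, ∀ p : EuclideanSpace ℝ (Fin m),
            p - x 0 ∈ Submodule.span ℝ
              ((fun j : Fin k => x j.succ - x 0) '' {j | (j : ℕ) < (i : ℕ)}) →
            α * r ≤ dist (x i.succ) p) →
        ∀ q : EuclideanSpace ℝ (Fin m),
          q - x 0 ∈ Submodule.span ℝ (Set.range (fun j : Fin k => x j.succ - x 0)) →
          (∃! a : Fin k → ℝ, q = x 0 + ∑ j, a j • (x j.succ - x 0)) ∧
          ∀ a : Fin k → ℝ, q = x 0 + ∑ j, a j • (x j.succ - x 0) →
            ∀ j, |a j| ≤ C * ‖q - x 0‖ / r := by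
  refine ⟨(1 + α⁻¹) ^ k / α, by positivity, fun r x hr hball hsep q hq => ?_⟩
  set v := fun j : Fin k => x j.succ - x 0
  have hαr : 0 < α * r := by positivity
  have hR : ∀ j, ‖v j‖ ≤ r := fun j => (mem_ball_iff_norm.1 (hball j.succ)).le
  have hvsep : ∀ i, ∀ p ∈ span ℝ (v '' Iio i), α * r ≤ ‖v i - p‖ := fun i p hp => by
    have := hsep i (x 0 + p) (by rw [add_sub_cancel_left]; exact hp)
    simpa [v, dist_eq_norm, sub_sub] using this
  have hcoord : ∀ a : Fin k → ℝ, q = x 0 + ∑ j, a j • v j ↔ ∑ j, a j • v j = q - x 0 :=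
    fun a => by rw [eq_sub_iff_add_eq', eq_comm]
  refine ⟨?_, fun a ha j => ?_⟩
  · obtain ⟨b, hb⟩ := (mem_span_range_iff_exists_fun ℝ).1 hq
    refine ⟨b, (hcoord b).2 hb, fun a ha => funext ?_⟩
    exact Fintype.linearIndependent_iffₛ.1 (linearIndependent_of_le_norm_sub_span hαr hR hvsep)
      a b (((hcoord a).1 ha).trans hb.symm)
  · have h := abs_le_norm_sum_smul_of_le_norm_sub_span hαr hR hvsep a j
    rw [(hcoord a).1 ha, show r / (α * r) = α⁻¹ by field_simp] at h
    exact h.trans_eq (by ring)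
end

section
/- Let Q be a symmetric positive semidefinite bilinear form on ℝ^m with eigenvalues λ_1 ≥ λ_2 ≥ ... ≥ λ_m and corresponding orthonormal eigenvectors e_1, ..., e_m. Suppose λ_2 > λ_3. Set 𝓛 = span{e_3, ..., e_m} and define for any (m-2)-dimensional subspace L the quantity S(L) = (1/2)Σ_{i} Q[v_i, v_i] over an orthonormal basis {v_i} of L. Then for any (m-2)-subspace L: S(L) ≥ S(𝓛) + (1/2)(λ_2 - λ_3)·c(m)·d_Gr(L, 𝓛)², where d_Gr is the Grassmannian distance and c(m) > 0 depends only on m. -/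
/-!
Write `t j = ‖Π_L (e j)‖²`. Expanding in the eigenbasis, `∑ Q (b i) (b i) = ∑ λ_j t_j`, where the
weights `t j` lie in `[0, 1]` and add up to `dim 𝓛`. Hence any weight that `L` puts on the two top
eigendirections is matched by an equal deficit on the directions of `𝓛`, and trading one for the
other gains at least `λ₂ - λ₃` per unit: `S(L) - S(𝓛) ≥ ½ (λ₂ - λ₃) ∑_{j < 2} t j`. On the other
hand the operator norm is bounded by the Hilbert–Schmidt norm in the basis `e`, and
`∑_j ‖(Π_L - Π_𝓛) e_j‖² = 2 ∑_{j < 2} t j`, so `c = 1/2` works.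
-/

open Finset RealInnerProductSpace

section

variable {ι E : Type*} [Fintype ι] [NormedAddCommGroup E] [InnerProductSpace ℝ E]

theorem LinearMap.apply_self_eq_sum_of_diagonal [DecidableEq ι] (e : OrthonormalBasis ι ℝ E)
    (Q : E →ₗ[ℝ] E →ₗ[ℝ] ℝ) (lam : ι → ℝ)
    (hdiag : ∀ i j, Q (e i) (e j) = if i = j then lam i else 0) (x : E) :
    Q x x = ∑ j, lam j * ⟪e j, x⟫ ^ 2 := by
  conv_lhs => rw [← e.sum_repr' x]
  simp only [map_sum, LinearMap.sum_apply, map_smul, LinearMap.smul_apply, hdiag, smul_eq_mul,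
    mul_ite, mul_zero, sum_ite_eq', mem_univ, if_true]
  exact sum_congr rfl fun j _ => by ring

theorem Orthonormal.sum_sq_inner_eq_norm_sq_starProjection {κ : Type*} [Fintype κ]
    {b : κ → E} (hb : Orthonormal ℝ b) {L : Submodule ℝ E} [L.HasOrthogonalProjection]
    (hL : Submodule.span ℝ (Set.range b) = L) (x : E) :
    ∑ i, ⟪b i, x⟫ ^ 2 = ‖L.starProjection x‖ ^ 2 := by
  subst hL
  let bL : OrthonormalBasis κ ℝ (Submodule.span ℝ (Set.range b)) :=
    (Module.Basis.span hb.linearIndependent).toOrthonormalBasis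
      ((Submodule.span ℝ (Set.range b)).subtypeₗᵢ.orthonormal_comp_iff.mp
        (by simpa [Function.comp_def, Module.Basis.span_apply] using hb))
  have hbL : ∀ i, (bL i : E) = b i := by simp [bL, Module.Basis.span_apply]
  rw [Submodule.starProjection_apply, Submodule.norm_coe, ← bL.sum_sq_inner_right]
  refine sum_congr rfl fun i _ => ?_
  rw [← hbL, Submodule.inner_orthogonalProjectionOnto_eq_of_mem_left]

theorem LinearMap.sum_apply_self_eq_sum_mul_norm_sq_starProjection [DecidableEq ι]
    {κ : Type*} [Fintype κ] (e : OrthonormalBasis ι ℝ E) (Q : E →ₗ[ℝ] E →ₗ[ℝ] ℝ) (lam : ι → ℝ)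
    (hdiag : ∀ i j, Q (e i) (e j) = if i = j then lam i else 0) {b : κ → E}
    (hb : Orthonormal ℝ b) {L : Submodule ℝ E} [L.HasOrthogonalProjection]
    (hL : Submodule.span ℝ (Set.range b) = L) :
    ∑ i, Q (b i) (b i) = ∑ j, lam j * ‖L.starProjection (e j)‖ ^ 2 := by
  simp_rw [Q.apply_self_eq_sum_of_diagonal e lam hdiag,
    ← hb.sum_sq_inner_eq_norm_sq_starProjection hL, real_inner_comm (e _), mul_sum]
  exact sum_comm

theorem Orthonormal.sum_norm_sq_starProjection_eq_card {κ : Type*} [Fintype κ]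
    (e : OrthonormalBasis ι ℝ E) {b : κ → E} (hb : Orthonormal ℝ b) {L : Submodule ℝ E}
    [L.HasOrthogonalProjection] (hL : Submodule.span ℝ (Set.range b) = L) :
    ∑ j, ‖L.starProjection (e j)‖ ^ 2 = Fintype.card κ := by
  simp_rw [← hb.sum_sq_inner_eq_norm_sq_starProjection hL]
  rw [sum_comm]
  simp [real_inner_comm (e _), e.sum_sq_inner_right, hb.1]

theorem ContinuousLinearMap.opNorm_sq_le_sum_norm_sq_apply {F : Type*} [NormedAddCommGroup F]
    [InnerProductSpace ℝ F] (e : OrthonormalBasis ι ℝ E) (T : E →L[ℝ] F) :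
    ‖T‖ ^ 2 ≤ ∑ j, ‖T (e j)‖ ^ 2 := by
  refine (Real.le_sqrt (norm_nonneg _) (by positivity)).mp
    (T.opNorm_le_bound (by positivity) fun x => ?_)
  calc ‖T x‖ = ‖∑ j, ⟪e j, x⟫ • T (e j)‖ := by
        conv_lhs => rw [← e.sum_repr' x]
        simp only [map_sum, map_smul]
    _ ≤ ∑ j, |⟪e j, x⟫| * ‖T (e j)‖ := by
        refine (norm_sum_le _ _).trans_eq ?_
        simp only [norm_smul, Real.norm_eq_abs]
    _ ≤ √(∑ j, |⟪e j, x⟫| ^ 2) * √(∑ j, ‖T (e j)‖ ^ 2) := Real.sum_mul_le_sqrt_mul_sqrt _ _ _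
    _ = √(∑ j, ‖T (e j)‖ ^ 2) * ‖x‖ := by
        simp only [sq_abs, e.sum_sq_inner_right, Real.sqrt_sq (norm_nonneg x), mul_comm]

theorem Finset.sum_one_sub_eq_sum_compl [DecidableEq ι] {s : Finset ι} {t : ι → ℝ}
    (hsum : ∑ j, t j = #s) : ∑ j ∈ s, (1 - t j) = ∑ j ∈ sᶜ, t j := by
  rw [sum_sub_distrib, sum_const, nsmul_one, ← hsum, ← sum_add_sum_compl s t]
  ring

theorem Finset.sub_mul_sum_compl_le_sum_mul_sub_sum [DecidableEq ι] {s : Finset ι}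
    {lam t : ι → ℝ} {a b : ℝ} (ha : ∀ j ∉ s, a ≤ lam j) (hb : ∀ j ∈ s, lam j ≤ b)
    (ht₀ : ∀ j ∉ s, 0 ≤ t j) (ht₁ : ∀ j ∈ s, t j ≤ 1) (hsum : ∑ j, t j = #s) :
    (a - b) * ∑ j ∈ sᶜ, t j ≤ ∑ j, lam j * t j - ∑ j ∈ s, lam j :=
  calc (a - b) * ∑ j ∈ sᶜ, t j = ∑ j ∈ sᶜ, a * t j - ∑ j ∈ s, b * (1 - t j) := by
        rw [← mul_sum, ← mul_sum, sum_one_sub_eq_sum_compl hsum]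
        ring
    _ ≤ ∑ j ∈ sᶜ, lam j * t j - ∑ j ∈ s, lam j * (1 - t j) := by
        gcongr with j hj j hj
        · exact ht₀ j (mem_compl.mp hj)
        · exact ha j (mem_compl.mp hj)
        · exact sub_nonneg.mpr (ht₁ j hj)
        · exact hb j hj
    _ = ∑ j, lam j * t j - ∑ j ∈ s, lam j := by
        rw [← sum_add_sum_compl s]
        simp only [mul_sub, mul_one, sum_sub_distrib]
        ring

theorem OrthonormalBasis.starProjection_span_image_of_mem (e : OrthonormalBasis ι ℝ E)
    {s : Finset ι} [(Submodule.span ℝ (e '' s)).HasOrthogonalProjection] {j : ι} (hj : j ∈ s) :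
    (Submodule.span ℝ (e '' s)).starProjection (e j) = e j :=
  Submodule.starProjection_eq_self_iff.mpr (Submodule.subset_span (Set.mem_image_of_mem e hj))

theorem OrthonormalBasis.starProjection_span_image_of_notMem (e : OrthonormalBasis ι ℝ E)
    {s : Finset ι} [(Submodule.span ℝ (e '' s)).HasOrthogonalProjection] {j : ι} (hj : j ∉ s) :
    (Submodule.span ℝ (e '' s)).starProjection (e j) = 0 := by
  refine (Submodule.starProjection_apply_eq_zero_iff _).mpr <| Submodule.isOrtho_iff_le.mp
    (Submodule.isOrtho_span.mpr ?_) (Submodule.mem_span_singleton_self (e j))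
  rintro _ rfl _ ⟨i, hi, rfl⟩
  exact e.orthonormal.2 fun h => hj (h ▸ hi)

theorem OrthonormalBasis.norm_sq_starProjection_sub_starProjection_le [DecidableEq ι]
    (e : OrthonormalBasis ι ℝ E) (s : Finset ι) {L K : Submodule ℝ E} [L.HasOrthogonalProjection]
    [K.HasOrthogonalProjection] (hK : Submodule.span ℝ (e '' s) = K)
    (hL : ∑ j, ‖L.starProjection (e j)‖ ^ 2 = #s) :
    ‖L.starProjection - K.starProjection‖ ^ 2 ≤ 2 * ∑ j ∈ sᶜ, ‖L.starProjection (e j)‖ ^ 2 := by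
  subst hK
  refine (ContinuousLinearMap.opNorm_sq_le_sum_norm_sq_apply e _).trans_eq ?_
  rw [← sum_add_sum_compl s, two_mul]
  nth_rw 1 [← sum_one_sub_eq_sum_compl hL]
  congr 1
  · refine sum_congr rfl fun j hj => ?_
    rw [sub_apply, e.starProjection_span_image_of_mem hj, norm_sub_rev,
      ← Submodule.starProjection_orthogonal_val]
    have := Submodule.norm_sq_eq_add_norm_sq_starProjection (e j) L
    rw [e.orthonormal.1 j] at this
    linarith
  · refine sum_congr rfl fun j hj => ?_
    rw [sub_apply, e.starProjection_span_image_of_notMem (mem_compl.mp hj), sub_zero]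

end

/-- Quantitative uniqueness of the best `(m-2)`-plane for a PSD bilinear form with an
eigenvalue gap `λ₂ > λ₃`:
`S(L) ≥ S(𝓛) + ½(λ₂-λ₃)·c(m)·‖Π_L - Π_𝓛‖²` for every `(m-2)`-subspace `L`. -/
theorem stmt_6 (m : ℕ) (hm : 3 ≤ m) :
    ∃ c : ℝ, 0 < c ∧
      ∀ (Q : EuclideanSpace ℝ (Fin m) →ₗ[ℝ] EuclideanSpace ℝ (Fin m) →ₗ[ℝ] ℝ)
        (e : OrthonormalBasis (Fin m) ℝ (EuclideanSpace ℝ (Fin m))) (lam : Fin m → ℝ),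
        (∀ v w, Q v w = Q w v) → (∀ v, 0 ≤ Q v v) →
        Antitone lam →
        (∀ i j, Q (e i) (e j) = if i = j then lam i else 0) →
        lam ⟨2, by omega⟩ < lam ⟨1, by omega⟩ →
        ∀ (L : Submodule ℝ (EuclideanSpace ℝ (Fin m)))
          (b : Fin (m - 2) → EuclideanSpace ℝ (Fin m)),
          Module.finrank ℝ L = m - 2 →
          Orthonormal ℝ b → Submodule.span ℝ (Set.range b) = L →
          (1 / 2) * ∑ i, Q (b i) (b i)
            ≥ (1 / 2) * (∑ i : Fin m, if 2 ≤ (i : ℕ) then lam i else 0)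
              + (1 / 2) * (lam ⟨1, by omega⟩ - lam ⟨2, by omega⟩) * c *
                ‖(L.subtypeL.comp (Submodule.orthogonalProjection L))
                  - ((Submodule.span ℝ (e '' {i : Fin m | 2 ≤ (i : ℕ)})).subtypeL.comp
                      (Submodule.orthogonalProjection (Submodule.span ℝ (e '' {i : Fin m | 2 ≤ (i : ℕ)}))))‖ ^ 2 := by
  refine ⟨1 / 2, by norm_num, fun Q e lam _ _ hanti hdiag hgap L b _ hb hspan => ?_⟩
  set s : Finset (Fin m) := Ici ⟨2, by omega⟩
  have hs : {i : Fin m | 2 ≤ (i : ℕ)} = s := by ext; simp [s, Fin.le_def]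
  have hS𝓛 : (∑ i : Fin m, if 2 ≤ (i : ℕ) then lam i else 0) = ∑ i ∈ s, lam i := by
    rw [← sum_filter]; congr; ext; simp [s, Fin.le_def]
  set t : Fin m → ℝ := fun j => ‖L.starProjection (e j)‖ ^ 2
  have hcard : ∑ j, t j = #s := by
    rw [hb.sum_norm_sq_starProjection_eq_card e hspan, Fin.card_Ici]; simp
  have hcost : (lam ⟨1, by omega⟩ - lam ⟨2, by omega⟩) * ∑ j ∈ sᶜ, t j
      ≤ ∑ j, lam j * t j - ∑ j ∈ s, lam j :=
    sub_mul_sum_compl_le_sum_mul_sub_sum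
      (fun j hj => hanti (by simp [s, Fin.le_def] at hj ⊢; omega))
      (fun j hj => hanti (by simpa [s] using hj))
      (fun j _ => sq_nonneg _)
      (fun j _ => pow_le_one₀ (norm_nonneg _)
        ((L.norm_starProjection_apply_le (e j)).trans_eq (e.orthonormal.1 j)))
      hcard
  have hdist := e.norm_sq_starProjection_sub_starProjection_le s (L := L)
    (K := Submodule.span ℝ (e '' {i | 2 ≤ (i : ℕ)})) (by rw [hs]) hcard
  rw [Q.sum_apply_self_eq_sum_mul_norm_sq_starProjection e lam hdiag hb hspan, hS𝓛]
  change _ ≥ _ + _ *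
    ‖L.starProjection - (Submodule.span ℝ (e '' {i | 2 ≤ (i : ℕ)})).starProjection‖ ^ 2
  linarith [mul_le_mul_of_nonneg_left hdist (sub_pos.mpr hgap).le]
end

section
/- Let ν be an (m-2)-rectifiable Radon measure on B_1 ⊂ ℝ^m of the form ν = θ(x)H^{m-2}⌞Σ with θ ≥ ε_0 > 0 on Σ, and suppose ν is invariant under translations by an (m-1)-dimensional subspace L (that is, ν(A + l) = ν(A) for all l ∈ L with A + l ⊂ B_1). If ν is locally finite, then ν = 0 on B_1. -/
/-!
If `μ B₁ ≠ 0`, some `A = S ∩ closedBall 0 q` with `q < 1` has `0 < μ A < ∞` and stays inside `B₁`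
under all translations by `l ∈ L` with `‖l‖ < 1 - q`. Averaging `μ (A + l) = μ A` over these `l`
and exchanging the integrals produces a point `x` such that `x - l ∈ A` for a set of `l ∈ L` of
positive `H^{m-1}` measure. Thus `A` contains an isometric copy of a set of positive
`H^{m-1}` measure, so `H^{m-2}(A) = ∞`, and `θ ≥ ε₀` on `A` forces `μ A = ∞`.
-/

open Set Metric MeasureTheory ENNReal

lemma le_withDensity_restrict_apply {X : Type*} [MeasurableSpace X] (ν : Measure X)
    {S E : Set X} {θ : X → ℝ≥0∞} {c : ℝ≥0∞} (hθ : ∀ x ∈ S, c ≤ θ x) (hE : MeasurableSet E)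
    (hES : E ⊆ S) : c * ν E ≤ (ν.restrict S).withDensity θ E := by
  rw [withDensity_apply _ hE, Measure.restrict_restrict hE, inter_eq_self_of_subset_left hES,
    ← setLIntegral_const]
  exact setLIntegral_mono' hE fun x hx => hθ x (hES hx)

lemma withDensity_restrict_compl_eq_zero {X : Type*} [MeasurableSpace X] (ν : Measure X)
    {S : Set X} (hS : MeasurableSet S) (θ : X → ℝ≥0∞) : (ν.restrict S).withDensity θ Sᶜ = 0 :=
  withDensity_absolutelyContinuous _ _ (by simp [Measure.restrict_apply hS.compl])

lemma exists_lt_measure_closedBall_ne_zero {X : Type*} [PseudoMetricSpace X] [MeasurableSpace X]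
    {μ : Measure X} {x : X} {r : ℝ} (h : μ (ball x r) ≠ 0) : ∃ q < r, μ (closedBall x q) ≠ 0 := by
  obtain ⟨u, -, hu, hlim⟩ := exists_seq_strictMono_tendsto' (sub_one_lt r)
  by_contra! h0
  refine h (measure_mono_null (fun y hy => ?_) (measure_iUnion_null fun n => h0 (u n) (hu n).2))
  obtain ⟨n, hn⟩ := (hlim.eventually (lt_mem_nhds (mem_ball.1 hy))).exists
  exact mem_iUnion.2 ⟨n, mem_closedBall.2 hn.le⟩

lemma exists_measure_sub_preimage_inter_ne_zero {E F : Type*} [AddGroup E] [MeasurableSpace E]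
    [MeasurableSub₂ E] [MeasurableSpace F] {μ : Measure E} {ν : Measure F} [SFinite μ] [SFinite ν]
    {f : F → E} (hf : Measurable f) {A : Set E} {D : Set F} (hA : MeasurableSet A)
    (hD : MeasurableSet D) (hinv : ∀ l ∈ D, μ ((· + f l) '' A) = μ A) (hμA : μ A ≠ 0)
    (hνD : ν D ≠ 0) : ∃ x, ν ((fun l => x - f l) ⁻¹' A ∩ D) ≠ 0 := by
  set T : Set (F × E) := {p | p.2 - f p.1 ∈ A ∧ p.1 ∈ D}
  have hT : MeasurableSet T :=
    ((measurable_snd.sub (hf.comp measurable_fst)) hA).inter (measurable_fst hD)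
  have hslice : ∀ l, μ (Prod.mk l ⁻¹' T) = D.indicator (fun _ => μ A) l := by
    intro l
    by_cases hl : l ∈ D
    · rw [indicator_of_mem hl, ← hinv l hl, image_add_right]
      simp [T, hl, sub_eq_add_neg, preimage]
    · simp [T, hl]
  have hprod : ν.prod μ T = μ A * ν D := by
    rw [Measure.prod_apply hT, funext hslice, lintegral_indicator_const hD]
  by_contra! h
  have : ν.prod μ T = 0 := by
    rw [Measure.prod_apply_symm hT]
    exact (lintegral_congr h).trans lintegral_zero
  exact mul_ne_zero hμA hνD (hprod ▸ this)

theorem withDensity_hausdorffMeasure_eq_zero_of_translation_invariant {E : Type*}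
    [NormedAddCommGroup E] [NormedSpace ℝ E] [MeasurableSpace E] [BorelSpace E]
    [SecondCountableTopology E] {n : ℕ} {s : ℝ} (hs : s < n)
    (f : EuclideanSpace ℝ (Fin n) →ₗᵢ[ℝ] E) {S A : Set E} {θ : E → ℝ≥0∞} {c : ℝ≥0∞} (hc : c ≠ 0)
    (hθ : ∀ x ∈ S, c ≤ θ x) {μ : Measure E} (hμ : μ = (μH[s].restrict S).withDensity θ)
    [SFinite μ] (hA : MeasurableSet A) (hAS : A ⊆ S) (hAfin : μ A ≠ ⊤) {δ : ℝ} (hδ : 0 < δ)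
    (hinv : ∀ l ∈ ball 0 δ, μ ((· + f l) '' A) = μ A) : μ A = 0 := by
  by_contra hA0
  -- `μH[n]` is an additive Haar measure on `EuclideanSpace ℝ (Fin n)`, so balls have positive mass.
  obtain ⟨x, hx⟩ := exists_measure_sub_preimage_inter_ne_zero (ν := μH[n])
    f.continuous.measurable hA measurableSet_ball hinv hA0 (measure_ball_pos _ _ hδ).ne'
  set G := (fun l => x - f l) ⁻¹' A ∩ ball 0 δ
  have hφ : Isometry fun l => x - f l := (IsometryEquiv.subLeft x).isometry.comp f.isometry
  have hGtop : μH[s] ((fun l => x - f l) '' G) = ⊤ :=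
    (Measure.hausdorffMeasure_zero_or_top hs _).resolve_left
      (by rwa [hφ.hausdorffMeasure_image (Or.inl n.cast_nonneg)])
  have hAtop : μH[s] A = ⊤ :=
    top_le_iff.1 (hGtop ▸ measure_mono (image_subset_iff.2 inter_subset_left))
  have hlow := hμ ▸ le_withDensity_restrict_apply μH[s] hθ hA hAS
  rw [hAtop, mul_top hc] at hlow
  exact hAfin (top_le_iff.1 hlow)

theorem stmt_17_general (m : ℕ) (ε₀ : ℝ) (hε₀ : 0 < ε₀)
    (S : Set (EuclideanSpace ℝ (Fin m))) (hSmeas : MeasurableSet S)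
    (θ : EuclideanSpace ℝ (Fin m) → ℝ≥0∞)
    (hθ : ∀ x ∈ S, ENNReal.ofReal ε₀ ≤ θ x)
    (μ : Measure (EuclideanSpace ℝ (Fin m)))
    (hμ : μ = ((μH[((m : ℝ) - 2)]).restrict S).withDensity θ)
    (hfin : IsLocallyFiniteMeasure μ)
    (L : Submodule ℝ (EuclideanSpace ℝ (Fin m)))
    (hL : Module.finrank ℝ L = m - 1)
    (hinv : ∀ l ∈ L, ∀ A : Set (EuclideanSpace ℝ (Fin m)),
      MeasurableSet A → A ⊆ ball (0 : EuclideanSpace ℝ (Fin m)) 1 →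
      (fun x => x + l) '' A ⊆ ball (0 : EuclideanSpace ℝ (Fin m)) 1 →
      μ ((fun x => x + l) '' A) = μ A) :
    μ (ball (0 : EuclideanSpace ℝ (Fin m)) 1) = 0 := by
  by_contra hne
  have : SigmaFinite μ := sigmaFinite_of_locallyFinite
  obtain ⟨q, hq1, hq⟩ := exists_lt_measure_closedBall_ne_zero hne
  set A := closedBall 0 q ∩ S
  have hA : MeasurableSet A := measurableSet_closedBall.inter hSmeas
  have hAball : μ A = μ (closedBall 0 q) :=
    measure_inter_conull (hμ ▸ withDensity_restrict_compl_eq_zero _ hSmeas θ)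
  have hAfin : μ A ≠ ⊤ := hAball ▸ (isCompact_closedBall _ _).measure_lt_top.ne
  have hAsub : A ⊆ ball 0 1 := fun a ha =>
    mem_ball_zero_iff.2 ((mem_closedBall_zero_iff.1 ha.1).trans_lt hq1)
  let b := (stdOrthonormalBasis ℝ L).reindex (finCongr hL)
  let f := L.subtypeₗᵢ.comp b.repr.symm.toLinearIsometry
  have hmove : ∀ l ∈ ball (0 : EuclideanSpace ℝ (Fin (m - 1))) (1 - q),
      (· + f l) '' A ⊆ ball 0 1 := by
    rintro l hl _ ⟨a, ⟨ha, -⟩, rfl⟩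
    rw [mem_ball_zero_iff] at hl ⊢
    calc ‖a + f l‖ ≤ ‖a‖ + ‖l‖ := f.norm_map l ▸ norm_add_le a (f l)
      _ < 1 := by linarith [mem_closedBall_zero_iff.1 ha]
  have hdim : (m : ℝ) - 2 < (m - 1 : ℕ) := by
    have : (m : ℝ) ≤ (m - 1 : ℕ) + 1 := by exact_mod_cast (by omega : m ≤ m - 1 + 1)
    linarith
  exact hq (hAball ▸ withDensity_hausdorffMeasure_eq_zero_of_translation_invariant hdim f
    (ofReal_pos.2 hε₀).ne' hθ hμ hA inter_subset_right hAfin (sub_pos.2 hq1)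
    fun l hl => hinv _ (b.repr.symm l).2 A hA hAsub (hmove l hl))

/-- A locally finite measure of the form `θ·H^{m-2}⌞S` on `B₁ ⊂ ℝ^m` with `θ ≥ ε₀ > 0` on `S`
which is invariant under translations by an `(m-1)`-dimensional subspace vanishes on `B₁`. -/
theorem stmt_17 (m : ℕ) (ε₀ : ℝ) (hε₀ : 0 < ε₀)
    (S : Set (EuclideanSpace ℝ (Fin m))) (hSmeas : MeasurableSet S)
    (hSsub : S ⊆ ball (0 : EuclideanSpace ℝ (Fin m)) 1)
    (θ : EuclideanSpace ℝ (Fin m) → ℝ≥0∞) (hθmeas : Measurable θ)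
    (hθ : ∀ x ∈ S, ENNReal.ofReal ε₀ ≤ θ x)
    (μ : Measure (EuclideanSpace ℝ (Fin m)))
    (hμ : μ = ((μH[((m : ℝ) - 2)]).restrict S).withDensity θ)
    (hfin : IsLocallyFiniteMeasure μ)
    (L : Submodule ℝ (EuclideanSpace ℝ (Fin m)))
    (hL : Module.finrank ℝ L = m - 1)
    (hinv : ∀ l ∈ L, ∀ A : Set (EuclideanSpace ℝ (Fin m)),
      MeasurableSet A → A ⊆ ball (0 : EuclideanSpace ℝ (Fin m)) 1 →
      (fun x => x + l) '' A ⊆ ball (0 : EuclideanSpace ℝ (Fin m)) 1 →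
      μ ((fun x => x + l) '' A) = μ A) :
    μ (ball (0 : EuclideanSpace ℝ (Fin m)) 1) = 0 :=
  stmt_17_general m ε₀ hε₀ S hSmeas θ hθ μ hμ hfin L hL hinv
end
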